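/- Let Λ = {n₀ < n₁ < ...} ⊂ ℕ be a set of positive integers such that sup_k |Λ ∩ [2^k, 2^{k+1})| ≤ N for some finite N. Then Λ is a finite union of quasi-independent sets; in fact a union of 2N sets each of which satisfies k(j+1) > Σ_{i≤j} k(i) for its increasing enumeration (k(j)). -/

import Mathlib

/-! Tag each `n ∈ Λ` by its rank inside its dyadic block `[2^k, 2^(k+1))`, `k = log₂ n`
(fewer than `N` choices), and by the parity of `k` (two choices). Within one tag class the
elements lie in distinct blocks of a common parity, so an element `b` with `log₂ b = k` exceeds
the sum of all smaller ones: that sum is below `∑ 2^(j+1)` over `j < k`, `j ≡ k (mod 2)`,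
which is `< 2^k ≤ b`. Super-increasing sets are quasi-independent: in a vanishing signed sum,
the largest element with a nonzero coefficient would exceed the sum of all the others. -/

/-- A set `Λ` of positive integers is quasi-independent if the only relation
`∑ ξ_n · n = 0` with coefficients `ξ_n ∈ {-1,0,1}` supported on a finite
subset of `Λ` is the trivial one. -/
def QuasiIndependent (Λ : Set ℕ) : Prop :=
  ∀ F : Finset ℕ, ↑F ⊆ Λ → ∀ ξ : ℕ → ℤ,
    (∀ n, ξ n ∈ ({-1, 0, 1} : Set ℤ)) →
    ∑ n ∈ F, ξ n * (n : ℤ) = 0 → ∀ n ∈ F, ξ n = 0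

/-- A set `S ⊆ ℕ` is super-increasing (i.e. its increasing enumeration `k(j)`
satisfies `k(j+1) > ∑_{i ≤ j} k(i)`) iff each of its elements is larger than
the sum of any finite set of smaller elements of `S`. -/
def SuperIncreasing (S : Set ℕ) : Prop :=
  ∀ b ∈ S, ∀ F : Finset ℕ, ↑F ⊆ S → (∀ a ∈ F, a < b) → ∑ a ∈ F, a < b

open Finset

theorem SuperIncreasing.quasiIndependent {S : Set ℕ} (h : SuperIncreasing S) :
    QuasiIndependent S := by
  intro F hF ξ hξ
  induction F using Finset.induction_on_max with
  | empty => simp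
  | insert b s hlt ih =>
    have hbs : b ∉ s := fun hb => lt_irrefl b (hlt b hb)
    have hsS : ↑s ⊆ S := fun x hx => hF (mem_insert_of_mem hx)
    rw [sum_insert hbs]
    intro hsum
    have hξb : ξ b = 0 := by
      by_contra hne
      have hb : (b : ℤ) ≤ |∑ n ∈ s, ξ n * (n : ℤ)| := by
        rw [← abs_neg, ← eq_neg_of_add_eq_zero_left hsum]
        rcases hξ b with h1 | h1 | h1 <;> simp_all
      have hrest : |∑ n ∈ s, ξ n * (n : ℤ)| ≤ ∑ n ∈ s, (n : ℤ) := by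
        refine (abs_sum_le_sum_abs _ _).trans (sum_le_sum fun n _ => ?_)
        rcases hξ n with h1 | h1 | h1 <;> simp_all
      have hsmall : ∑ n ∈ s, (n : ℤ) < b := by
        rw [← Nat.cast_sum, Nat.cast_lt]
        exact h b (hF (mem_insert_self b s)) s hsS hlt
      linarith
    rw [hξb, zero_mul, zero_add] at hsum
    intro n hn
    rcases mem_insert.1 hn with rfl | hn
    · exact hξb
    · exact ih hsS hsum n hn

theorem sum_two_pow_succ_lt_two_pow {k : ℕ} {T : Finset ℕ}
    (hT : ∀ j ∈ T, j < k ∧ j % 2 = k % 2) : ∑ j ∈ T, 2 ^ (j + 1) < 2 ^ k := by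
  induction T using Finset.induction_on_max generalizing k with
  | empty => simp
  | insert a s hlt ih =>
    obtain ⟨hak, hpar⟩ := hT a (mem_insert_self a s)
    have hs : ∑ j ∈ s, 2 ^ (j + 1) < 2 ^ a :=
      ih fun j hj => ⟨hlt j hj, (hT j (mem_insert_of_mem hj)).2.trans hpar.symm⟩
    rw [sum_insert fun ha => lt_irrefl a (hlt a ha)]
    calc 2 ^ (a + 1) + ∑ j ∈ s, 2 ^ (j + 1) < 2 ^ (a + 1) + 2 ^ a := by omega
      _ ≤ 2 ^ (a + 2) := by rw [pow_succ, pow_succ, pow_succ]; omega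
      _ ≤ 2 ^ k := Nat.pow_le_pow_right two_pos (by omega)

theorem superIncreasing_of_injOn_log {S : Set ℕ} (h0 : 0 ∉ S) (hinj : Set.InjOn (Nat.log 2) S)
    (hpar : ∀ a ∈ S, ∀ b ∈ S, Nat.log 2 a % 2 = Nat.log 2 b % 2) : SuperIncreasing S := by
  intro b hb F hF hlt
  have hlog : ∀ a ∈ F, Nat.log 2 a < Nat.log 2 b ∧ Nat.log 2 a % 2 = Nat.log 2 b % 2 := by
    intro a ha
    have hle : Nat.log 2 a ≤ Nat.log 2 b := Nat.log_mono_right (hlt a ha).le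
    have hne : Nat.log 2 a ≠ Nat.log 2 b := fun he => (hlt a ha).ne (hinj (hF ha) hb he)
    exact ⟨lt_of_le_of_ne hle hne, hpar a (hF ha) b hb⟩
  calc ∑ a ∈ F, a ≤ ∑ a ∈ F, 2 ^ (Nat.log 2 a + 1) :=
        sum_le_sum fun a _ => (Nat.lt_pow_succ_log_self one_lt_two a).le
    _ = ∑ j ∈ F.image (Nat.log 2), 2 ^ (j + 1) :=
        (sum_image (f := fun j => 2 ^ (j + 1)) fun x hx y hy => hinj (hF hx) (hF hy)).symm
    _ < 2 ^ Nat.log 2 b := sum_two_pow_succ_lt_two_pow fun j hj => by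
        obtain ⟨a, ha, rfl⟩ := mem_image.1 hj
        exact hlog a ha
    _ ≤ b := Nat.pow_log_le_self 2 fun hb0 => h0 (hb0 ▸ hb)

def dyadicBlock (Λ : Set ℕ) (k : ℕ) : Set ℕ :=
  Λ ∩ Set.Ico (2 ^ k) (2 ^ (k + 1))

theorem mem_dyadicBlock_log {Λ : Set ℕ} {n : ℕ} (hn : n ∈ Λ) (hn0 : n ≠ 0) :
    n ∈ dyadicBlock Λ (Nat.log 2 n) :=
  ⟨hn, Nat.pow_log_le_self 2 hn0, Nat.lt_pow_succ_log_self one_lt_two n⟩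

noncomputable def dyadicRank (Λ : Set ℕ) (n : ℕ) : ℕ :=
  open Classical in Nat.count (· ∈ dyadicBlock Λ (Nat.log 2 n)) n

theorem dyadicRank_lt_ncard {Λ : Set ℕ} {n : ℕ} (hn : n ∈ Λ) (hn0 : n ≠ 0) :
    dyadicRank Λ n < (dyadicBlock Λ (Nat.log 2 n)).ncard := by
  classical
  have hfin : (dyadicBlock Λ (Nat.log 2 n)).Finite :=
    (Set.finite_Ico _ _).subset Set.inter_subset_right
  rw [Set.ncard_eq_toFinset_card _ hfin]
  unfold dyadicRank
  convert Nat.count_lt_card (p := (· ∈ dyadicBlock Λ (Nat.log 2 n))) hfin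
    (mem_dyadicBlock_log hn hn0)

theorem eq_of_log_eq_of_dyadicRank_eq {Λ : Set ℕ} {m n : ℕ} (hm : m ∈ Λ) (hn : n ∈ Λ)
    (hm0 : m ≠ 0) (hn0 : n ≠ 0) (hlog : Nat.log 2 m = Nat.log 2 n)
    (hrank : dyadicRank Λ m = dyadicRank Λ n) : m = n := by
  classical
  unfold dyadicRank at hrank
  rw [hlog] at hrank
  exact Nat.count_injective (p := (· ∈ dyadicBlock Λ (Nat.log 2 n)))
    (hlog ▸ mem_dyadicBlock_log hm hm0) (mem_dyadicBlock_log hn hn0) (by convert hrank)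

theorem dyadic_blocks_implies_finite_union_quasiindependent
    (Λ : Set ℕ) (hpos : ∀ n ∈ Λ, 0 < n) (N : ℕ)
    (hblocks : ∀ k : ℕ, (Λ ∩ Set.Ico (2 ^ k) (2 ^ (k + 1))).ncard ≤ N) :
    ∃ parts : Fin (2 * N) → Set ℕ,
      Λ = ⋃ i, parts i ∧
      ∀ i, SuperIncreasing (parts i) ∧ QuasiIndependent (parts i) := by
  let tag : ℕ → ℕ := fun n => 2 * dyadicRank Λ n + Nat.log 2 n % 2
  have htag : ∀ n ∈ Λ, tag n < 2 * N := fun n hn => by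
    have := (dyadicRank_lt_ncard hn (hpos n hn).ne').trans_le (hblocks _)
    simp only [tag]
    omega
  refine ⟨fun i => {n ∈ Λ | tag n = i}, ?_, fun i => ?_⟩
  · ext n
    simp only [Set.mem_iUnion, Set.mem_ofPred_eq]
    exact ⟨fun hn => ⟨⟨tag n, htag n hn⟩, hn, rfl⟩, fun ⟨_, hn, _⟩ => hn⟩
  · have hsi : SuperIncreasing {n ∈ Λ | tag n = i} := by
      refine superIncreasing_of_injOn_log (fun h0 => (hpos 0 h0.1).false) ?_ ?_
      · rintro m ⟨hm, hmi⟩ n ⟨hn, hni⟩ hlog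
        refine eq_of_log_eq_of_dyadicRank_eq hm hn (hpos m hm).ne' (hpos n hn).ne' hlog ?_
        simp only [tag] at hmi hni
        omega
      · rintro m ⟨-, hmi⟩ n ⟨-, hni⟩
        simp only [tag] at hmi hni
        omega
    exact ⟨hsi, hsi.quasiIndependent⟩
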